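/- The map from the centralizer C_H(x) of x in the Baumslag-Solitar group H = ⟨x, y | y⁻¹xy = x²⟩ to the outer automorphism group Out(G) of the Baumslag-Gersten group G = ⟨x, y, t | y⁻¹xy = x², t⁻¹xt = y⟩, sending g to the class of the automorphism x ↦ x, y ↦ y, t ↦ gt, is an injective group homomorphism. -/

import Mathlib

/-!
For `g ∈ C_H(x)` the assignment `x ↦ x, y ↦ y, t ↦ g t` respects both relations (as `g` commutes
with `x`), and it fixes `H` pointwise, so composing two of them multiplies the `g`'s in reverse
order. The map is nevertheless a homomorphism because `C_H(x)` is abelian: writing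
`r k = y^k x y^-k` (a `2^k`-th root of `x`), every element of `H` is `r k ^ m * y ^ n`, and
commuting with `x` forces `n = 0`, since `y^-n x y^n = x^(2^n)` and `x` has infinite order.

If the automorphism attached to `g` is conjugation by `c`, then `c` centralises `x` and `y`. To see
that this forces `c = 1`, realise `G` as the HNN extension of `BS(1,2)` (itself an HNN extension
of `ℤ`) conjugating `y` to `x`. By the normal form theorem, an element outside the base group
that centralises `x` and `y` would conjugate both into the same one of `⟨y⟩`, `⟨x⟩`, which the
exponent sum in `y` rules out; inside `BS(1,2)` the normal form `r k ^ m * y ^ n` does the job.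
Then `t = g t`, so `g = 1`.
-/

/-- Relators for the Baumslag-Gersten group G = ⟨x, y, t | y⁻¹xy = x², t⁻¹xt = y⟩,
with `0 ↦ x`, `1 ↦ y`, `2 ↦ t`. -/
def bgRels : Set (FreeGroup (Fin 3)) :=
  {(FreeGroup.of 1)⁻¹ * FreeGroup.of 0 * FreeGroup.of 1 *
      (FreeGroup.of 0 * FreeGroup.of 0)⁻¹,
   (FreeGroup.of 2)⁻¹ * FreeGroup.of 0 * FreeGroup.of 2 * (FreeGroup.of 1)⁻¹}

/-- The Baumslag-Gersten group. -/
abbrev BG := PresentedGroup bgRels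

/-- The generator x of the Baumslag-Gersten group. -/
def gx : BG := PresentedGroup.of 0

/-- The generator y of the Baumslag-Gersten group. -/
def gy : BG := PresentedGroup.of 1

/-- The generator t of the Baumslag-Gersten group. -/
def gt : BG := PresentedGroup.of 2

/-- The inner automorphisms of the Baumslag-Gersten group. -/
def innBG : Subgroup (MulAut BG) := (MulAut.conj : BG →* MulAut BG).range

instance : innBG.Normal := by
  constructor
  intro f hf g
  obtain ⟨h, rfl⟩ := hf
  refine ⟨g h, ?_⟩
  ext z
  simp [innBG, MulAut.conj]

/-- The outer automorphism group of the Baumslag-Gersten group. -/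
abbrev OutBG := MulAut BG ⧸ innBG

open Multiplicative HNNExtension

noncomputable section

def MulAut.ofEndHom {K M : Type*} [Group K] [Monoid M] (f : K →* Monoid.End M) :
    K →* MulAut M where
  toFun g := (f g).toMulEquiv (f g⁻¹)
    (show f g⁻¹ * f g = 1 by rw [← map_mul, inv_mul_cancel, map_one])
    (show f g * f g⁻¹ = 1 by rw [← map_mul, mul_inv_cancel, map_one])
  map_one' := MulEquiv.ext fun x => DFunLike.congr_fun (map_one f) x
  map_mul' g h := MulEquiv.ext fun x => DFunLike.congr_fun (map_mul f g h) x

@[simp] lemma MulAut.ofEndHom_apply {K M : Type*} [Group K] [Monoid M] (f : K →* Monoid.End M)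
    (g : K) (x : M) : MulAut.ofEndHom f g x = f g x := rfl

namespace BaumslagSolitar

variable {G : Type*} [Group G] {a b : G}

/-- Under `b⁻¹ * a * b = a ^ 2`, a `2 ^ k`-th root of `a`. -/
def dyadicRoot (a b : G) (k : ℕ) : G := b ^ k * a * (b ^ k)⁻¹

@[simp] lemma dyadicRoot_zero : dyadicRoot a b 0 = a := by simp [dyadicRoot]

lemma conj_dyadicRoot_zpow (k : ℕ) (m : ℤ) :
    b * dyadicRoot a b k ^ m * b⁻¹ = dyadicRoot a b (k + 1) ^ m := by
  rw [← conj_zpow, dyadicRoot, dyadicRoot, pow_succ']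
  group

variable (hab : b⁻¹ * a * b = a ^ 2)
include hab

lemma inv_pow_mul_mul_pow (n : ℕ) : (b ^ n)⁻¹ * a * b ^ n = a ^ 2 ^ n := by
  induction n with
  | zero => simp
  | succ n ih =>
    calc (b ^ (n + 1))⁻¹ * a * b ^ (n + 1) = b⁻¹ * ((b ^ n)⁻¹ * a * b ^ n) * b := by group
      _ = (b⁻¹ * a * b) ^ 2 ^ n := by simpa [ih] using (conj_pow (a := b⁻¹) (b := a)).symm
      _ = a ^ 2 ^ (n + 1) := by rw [hab, ← pow_mul, pow_succ']

lemma dyadicRoot_eq_pow (k j : ℕ) : dyadicRoot a b k = dyadicRoot a b (k + j) ^ 2 ^ j := by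
  rw [dyadicRoot, dyadicRoot, conj_pow, ← inv_pow_mul_mul_pow hab j, pow_add]
  group

lemma dyadicRoot_pow_two_pow (k : ℕ) : dyadicRoot a b k ^ 2 ^ k = a := by
  simpa using (dyadicRoot_eq_pow hab 0 k).symm

lemma commute_dyadicRoot (j k : ℕ) : Commute (dyadicRoot a b j) (dyadicRoot a b k) := by
  rcases le_total j k with h | h
  · obtain ⟨i, rfl⟩ := Nat.exists_eq_add_of_le h
    rw [dyadicRoot_eq_pow hab j i]
    exact (Commute.refl _).pow_left _
  · obtain ⟨i, rfl⟩ := Nat.exists_eq_add_of_le h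
    rw [dyadicRoot_eq_pow hab k i]
    exact (Commute.refl _).pow_right _

lemma exists_eq_dyadicRoot_zpow_mul_zpow {g : G} (hg : g ∈ Subgroup.closure {a, b}) :
    ∃ (k : ℕ) (m n : ℤ), g = dyadicRoot a b k ^ m * b ^ n := by
  induction hg using Subgroup.closure_induction_left with
  | one => exact ⟨0, 0, 0, by simp⟩
  | mul_left s hs g _ ih =>
    obtain ⟨k, m, n, rfl⟩ := ih
    obtain rfl | rfl := hs
    · refine ⟨k, (2 ^ k : ℕ) + m, n, ?_⟩
      rw [zpow_add, zpow_natCast, dyadicRoot_pow_two_pow hab, mul_assoc]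
    · refine ⟨k + 1, m, n + 1, ?_⟩
      rw [← conj_dyadicRoot_zpow, zpow_add_one]
      group
  | inv_mul_cancel s hs g _ ih =>
    obtain ⟨k, m, n, rfl⟩ := ih
    obtain rfl | rfl := hs
    · refine ⟨k, -(2 ^ k : ℕ) + m, n, ?_⟩
      rw [zpow_add, zpow_neg, zpow_natCast, dyadicRoot_pow_two_pow hab, mul_assoc]
    · have h : dyadicRoot a s k ^ m = s * dyadicRoot a s k ^ (2 * m) * s⁻¹ := by
        rw [conj_dyadicRoot_zpow, zpow_mul, dyadicRoot_eq_pow hab k 1]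
        norm_cast
      refine ⟨k, 2 * m, n - 1, ?_⟩
      rw [h, zpow_sub_one]
      group

variable (ha : ¬IsOfFinOrder a)
include ha

lemma eq_zero_of_commute_zpow {n : ℤ} (h : Commute a (b ^ n)) : n = 0 := by
  suffices ∀ k : ℕ, Commute a (b ^ k) → k = 0 by
    obtain ⟨k, rfl | rfl⟩ := Int.eq_nat_or_neg n
    · exact_mod_cast this k (by exact_mod_cast h)
    · simpa using this k (by simpa using h.inv_right)
  intro k hk
  have : a ^ 2 ^ k = a ^ 1 := by
    rw [← inv_pow_mul_mul_pow hab, mul_assoc, hk.eq, inv_mul_cancel_left, pow_one]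
  simpa using injective_pow_iff_not_isOfFinOrder.mpr ha this

lemma exists_eq_dyadicRoot_zpow_of_commute {g : G} (hg : g ∈ Subgroup.closure {a, b})
    (hga : Commute a g) : ∃ (k : ℕ) (m : ℤ), g = dyadicRoot a b k ^ m := by
  obtain ⟨k, m, n, rfl⟩ := exists_eq_dyadicRoot_zpow_mul_zpow hab hg
  have hroot : Commute a (dyadicRoot a b k ^ m) := by
    simpa using (commute_dyadicRoot hab 0 k).zpow_right m
  have hn : n = 0 :=
    eq_zero_of_commute_zpow hab ha (by simpa using hroot.inv_right.mul_right hga)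
  exact ⟨k, m, by simp [hn]⟩

lemma commute_of_mem_closure_of_commute {g h : G} (hg : g ∈ Subgroup.closure {a, b})
    (hh : h ∈ Subgroup.closure {a, b}) (hga : Commute a g) (hha : Commute a h) : Commute g h := by
  obtain ⟨k, m, rfl⟩ := exists_eq_dyadicRoot_zpow_of_commute hab ha hg hga
  obtain ⟨j, l, rfl⟩ := exists_eq_dyadicRoot_zpow_of_commute hab ha hh hha
  exact (commute_dyadicRoot hab k j).zpow_zpow m l

lemma eq_one_of_mem_closure_of_commute {g : G} (hg : g ∈ Subgroup.closure {a, b})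
    (hga : Commute a g) (hgb : Commute b g) : g = 1 := by
  obtain ⟨k, m, rfl⟩ := exists_eq_dyadicRoot_zpow_of_commute hab ha hg hga
  set r := dyadicRoot a b (k + 1)
  have hr : r ^ m * r ^ m = r ^ m := by
    calc r ^ m * r ^ m = (r ^ 2 ^ 1) ^ m := by rw [← zpow_add, ← zpow_natCast, ← zpow_mul]; ring_nf
      _ = b * dyadicRoot a b k ^ m * b⁻¹ := by
        rw [← dyadicRoot_eq_pow hab, hgb.eq, mul_inv_cancel_right]
      _ = r ^ m := conj_dyadicRoot_zpow k m
  have hrm : r ^ m = 1 := by simpa using hr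
  have ham : a ^ m = a ^ (0 : ℤ) := by
    rw [← dyadicRoot_pow_two_pow hab (k + 1), ← zpow_natCast, ← zpow_mul, mul_comm, zpow_mul, hrm,
      one_zpow, zpow_zero]
  rw [injective_zpow_iff_not_isOfFinOrder.mpr ha ham, zpow_zero]

end BaumslagSolitar

namespace HNNExtension

open NormalWord

variable {G : Type*} [Group G]

section ReducedWord

variable {A B : Subgroup G} {φ : A ≃* B}

theorem ReducedWord.head_inv_mul_mul_head_mem_of_commute {w : ReducedWord G A B} {z : G}
    (hz : Commute (w.prod φ) (of z)) {u : ℤˣ} (hu : u ∈ w.toList.head?.map Prod.fst) :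
    w.head⁻¹ * z * w.head ∈ toSubgroup A B (-u) := by
  -- `w * of z` and `of z * w` are represented by reduced words with the same letters, one with
  -- last letter `(v, g * z)`, the other with head `z * w.head`; uniqueness compares their heads.
  obtain ⟨l, ⟨v, g⟩, hl⟩ : ∃ l p, w.toList = l ++ [p] := by
    rcases List.eq_nil_or_concat' w.toList with h | h
    · simp [h] at hu
    · exact h
  have chain : (l ++ [(v, g * z)]).IsChain (fun a b => a.2 ∈ toSubgroup A B a.1 → a.1 = b.1) := by
    have := w.chain
    rw [hl, List.isChain_append] at this
    exact List.isChain_append.2 ⟨this.1, List.isChain_singleton _, by simpa using this.2.2⟩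
  let w₁ : ReducedWord G A B := ⟨w.head, l ++ [(v, g * z)], chain⟩
  let w₂ : ReducedWord G A B := ⟨z * w.head, w.toList, w.chain⟩
  have hprod : w₁.prod φ = w₂.prod φ := by
    calc w₁.prod φ = w.prod φ * of z := by simp [w₁, ReducedWord.prod, hl, mul_assoc]
      _ = of z * w.prod φ := hz.eq
      _ = w₂.prod φ := by simp [w₂, ReducedWord.prod, mul_assoc]
  have hhead : w₁.toList.head?.map Prod.fst = w.toList.head?.map Prod.fst := by
    cases l <;> simp [w₁, hl]
  simpa [w₁, w₂, mul_assoc] using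
    (ReducedWord.map_fst_eq_and_of_prod_eq φ hprod).2 u (hhead ▸ hu)

theorem exists_conj_mem_of_commute {c : HNNExtension G A B φ} (hc : c ∉ of.range) :
    ∃ (g : G) (u : ℤˣ), ∀ z : G, Commute c (of z) → g⁻¹ * z * g ∈ toSubgroup A B u := by
  obtain ⟨d⟩ := TransversalPair.nonempty G A B
  set w := (NormalWord.equiv φ d c).toReducedWord
  have hw : w.prod φ = c := (NormalWord.equiv φ d).symm_apply_apply c
  obtain ⟨⟨u, g⟩, l, hl⟩ : ∃ p l, w.toList = p :: l :=
    List.exists_cons_of_ne_nil fun h => hc ⟨w.head, by simp [← hw, ReducedWord.prod, h]⟩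
  exact ⟨w.head, -u, fun z hz =>
    ReducedWord.head_inv_mul_mul_head_mem_of_commute (hw ▸ hz) (by simp [hl])⟩

end ReducedWord

variable {u v : G}

def zpowersEquivZPowersOfNotIsOfFinOrder (hu : ¬IsOfFinOrder u)
    (hv : ¬IsOfFinOrder v) : Subgroup.zpowers u ≃* Subgroup.zpowers v :=
  (MonoidHom.ofInjective (f := zpowersHom G u)
      ((injective_zpow_iff_not_isOfFinOrder.mpr hu).comp toAdd.injective)).symm.trans
    (MonoidHom.ofInjective (f := zpowersHom G v)
      ((injective_zpow_iff_not_isOfFinOrder.mpr hv).comp toAdd.injective))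

lemma zpowersEquivZPowersOfNotIsOfFinOrder_apply (hu : ¬IsOfFinOrder u) (hv : ¬IsOfFinOrder v)
    (n : ℤ) : (zpowersEquivZPowersOfNotIsOfFinOrder hu hv ⟨u ^ n, n, rfl⟩ : G) = v ^ n := by
  change zpowersHom G v ((MonoidHom.ofInjective _).symm _) = zpowersHom G v (ofAdd n)
  congr 1
  exact (MulEquiv.symm_apply_eq _).2 rfl

abbrev ConjExtension (u v : G) (hu : ¬IsOfFinOrder u) (hv : ¬IsOfFinOrder v) :=
  HNNExtension G (Subgroup.zpowers u) (Subgroup.zpowers v)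
    (zpowersEquivZPowersOfNotIsOfFinOrder hu hv)

namespace ConjExtension

variable {hu : ¬IsOfFinOrder u} {hv : ¬IsOfFinOrder v} {K : Type*} [Group K]

lemma t_mul_of : (t : ConjExtension u v hu hv) * of u = of v * t := by
  have := HNNExtension.t_mul_of (φ := zpowersEquivZPowersOfNotIsOfFinOrder hu hv)
    ⟨u ^ (1 : ℤ), 1, rfl⟩
  rw [zpowersEquivZPowersOfNotIsOfFinOrder_apply] at this
  simpa using this

def lift (f : G →* K) (k : K) (hk : k * f u = f v * k) :
    ConjExtension u v hu hv →* K :=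
  HNNExtension.lift f k <| by
    rintro ⟨_, n, rfl⟩
    rw [zpowersEquivZPowersOfNotIsOfFinOrder_apply, map_zpow, map_zpow]
    exact SemiconjBy.zpow_right hk n

@[simp] lemma lift_of (f : G →* K) (k : K) (hk : k * f u = f v * k) (g : G) :
    lift (hu := hu) (hv := hv) f k hk (of g) = f g :=
  HNNExtension.lift_of _ _ _ g

@[simp] lemma lift_t (f : G →* K) (k : K) (hk : k * f u = f v * k) :
    lift (hu := hu) (hv := hv) f k hk t = k :=
  HNNExtension.lift_t _ _ _

end ConjExtension

end HNNExtension

abbrev BS12 : Type :=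
  ConjExtension (ofAdd (2 : ℤ)) (ofAdd 1)
    (not_isOfFinOrder_of_isMulTorsionFree (by decide))
    (not_isOfFinOrder_of_isMulTorsionFree (by decide))

namespace BS12

def x : BS12 := of (ofAdd 1)

def y : BS12 := t

lemma inv_y_mul_x_mul_y : y⁻¹ * x * y = x ^ 2 := by
  rw [mul_assoc, inv_mul_eq_iff_eq_mul, x, y, ← map_pow]
  exact ConjExtension.t_mul_of.symm

lemma not_isOfFinOrder_x : ¬IsOfFinOrder x := by
  rw [x, (of_injective _).isOfFinOrder_iff]
  exact not_isOfFinOrder_of_isMulTorsionFree (by decide)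

variable {K : Type*} [Group K]

def lift (a b : K) (h : b⁻¹ * a * b = a ^ 2) : BS12 →* K :=
  ConjExtension.lift (zpowersHom K a) b <| by
    simp only [zpowersHom_apply, toAdd_ofAdd, zpow_ofNat, ← h]
    group

variable {a b : K} {h : b⁻¹ * a * b = a ^ 2}

@[simp] lemma lift_x : lift a b h x = a := (ConjExtension.lift_of _ _ _ _).trans (by simp)

@[simp] lemma lift_y : lift a b h y = b := ConjExtension.lift_t _ _ _

def yExponent : BS12 →* Multiplicative ℤ :=
  lift 1 (ofAdd 1) (by simp)

lemma not_isOfFinOrder_y : ¬IsOfFinOrder y := fun h =>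
  not_isOfFinOrder_of_isMulTorsionFree (a := ofAdd (1 : ℤ)) (by decide)
    (by simpa [yExponent] using yExponent.isOfFinOrder h)

lemma closure_x_y : Subgroup.closure {x, y} = ⊤ := by
  refine (Subgroup.eq_top_iff' _).2 fun g => ?_
  induction g using HNNExtension.induction_on with
  | of g =>
    have : of g = x ^ g.toAdd := by rw [x, ← map_zpow, ← ofAdd_zsmul, smul_eq_mul, mul_one]; rfl
    exact this ▸ zpow_mem (Subgroup.subset_closure (by simp)) _
  | t => exact Subgroup.subset_closure (by simp [y])
  | mul a b ha hb => exact mul_mem ha hb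
  | inv a ha => exact inv_mem ha

lemma eq_one_of_commute_x_y {g : BS12} (hx : Commute x g) (hy : Commute y g) : g = 1 :=
  BaumslagSolitar.eq_one_of_mem_closure_of_commute inv_y_mul_x_mul_y not_isOfFinOrder_x
    (closure_x_y ▸ Subgroup.mem_top g) hx hy

end BS12

abbrev BGModel : Type :=
  ConjExtension BS12.y BS12.x BS12.not_isOfFinOrder_y BS12.not_isOfFinOrder_x

lemma BGModel.eq_one_of_commute {c : BGModel} (hx : Commute (of BS12.x) c)
    (hy : Commute (of BS12.y) c) : c = 1 := by
  by_cases hc : c ∈ of.range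
  · obtain ⟨g, rfl⟩ := hc
    rw [BS12.eq_one_of_commute_x_y (hx.of_map (of_injective _)) (hy.of_map (of_injective _)),
      map_one]
  -- `yExponent` vanishes on conjugates of `x` and is `ofAdd 1` on conjugates of `y`.
  obtain ⟨g, u, hg⟩ := exists_conj_mem_of_commute hc
  rcases Int.units_eq_one_or u with rfl | rfl
  · obtain ⟨n, hn⟩ := Subgroup.mem_zpowers_iff.1 (hg _ hx.symm)
    have hn0 : n = 0 := by simpa [BS12.yExponent, mul_comm] using congrArg BS12.yExponent hn
    have hx1 : BS12.x = 1 := (conj_eq_one_iff (a := g⁻¹)).1 (by rw [inv_inv, ← hn, hn0, zpow_zero])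
    exact absurd (hx1 ▸ IsOfFinOrder.one) BS12.not_isOfFinOrder_x
  · obtain ⟨n, hn⟩ := Subgroup.mem_zpowers_iff.1 (hg _ hy.symm)
    have := congrArg BS12.yExponent hn
    simp [BS12.yExponent, mul_comm, eq_comm (a := (1 : Multiplicative ℤ))] at this

namespace BG

variable {K : Type*} [Group K]

lemma inv_gy_mul_gx_mul_gy : gy⁻¹ * gx * gy = gx ^ 2 := by
  have h := PresentedGroup.mk_eq_mk_of_mul_inv_mem (rels := bgRels) (Set.mem_insert _ _)
  simp only [map_mul, map_inv] at h
  rw [pow_two]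
  exact h

lemma inv_gt_mul_gx_mul_gt : gt⁻¹ * gx * gt = gy := by
  have h := PresentedGroup.mk_eq_mk_of_mul_inv_mem (rels := bgRels) (Set.mem_insert_of_mem _ rfl)
  simp only [map_mul, map_inv] at h
  exact h

section lift

def lift (x y t : K) (h₁ : y⁻¹ * x * y = x ^ 2) (h₂ : t⁻¹ * x * t = y) : BG →* K :=
  PresentedGroup.toGroup (f := ![x, y, t]) <| by
    rintro r (rfl | rfl) <;> simp [h₁, h₂, pow_two]

variable {x y t : K} {h₁ : y⁻¹ * x * y = x ^ 2} {h₂ : t⁻¹ * x * t = y}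

@[simp] lemma lift_gx : lift x y t h₁ h₂ gx = x := PresentedGroup.toGroup.of _
@[simp] lemma lift_gy : lift x y t h₁ h₂ gy = y := PresentedGroup.toGroup.of _
@[simp] lemma lift_gt : lift x y t h₁ h₂ gt = t := PresentedGroup.toGroup.of _

end lift

lemma hom_ext {f f' : BG →* K} (hx : f gx = f' gx) (hy : f gy = f' gy) (ht : f gt = f' gt) :
    f = f' :=
  PresentedGroup.ext fun i => by fin_cases i <;> assumption

def toModel : BG →* BGModel :=
  lift (of BS12.x) (of BS12.y) t
    (by rw [← map_inv, ← map_mul, ← map_mul, BS12.inv_y_mul_x_mul_y, map_pow])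
    (by rw [mul_assoc, inv_mul_eq_iff_eq_mul, ConjExtension.t_mul_of])

def ofModel : BGModel →* BG :=
  ConjExtension.lift (BS12.lift gx gy inv_gy_mul_gx_mul_gy) gt <| by
    rw [BS12.lift_x, BS12.lift_y, ← inv_gt_mul_gx_mul_gt]
    group

lemma ofModel_comp_toModel : ofModel.comp toModel = MonoidHom.id BG :=
  hom_ext (by simp [toModel, ofModel]) (by simp [toModel, ofModel])
    (by simp [toModel, ofModel])

lemma toModel_injective : Function.Injective toModel :=
  Function.LeftInverse.injective (g := ofModel) (DFunLike.congr_fun ofModel_comp_toModel)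

lemma not_isOfFinOrder_gx : ¬IsOfFinOrder gx := fun h =>
  BS12.not_isOfFinOrder_x <| (of_injective _).isOfFinOrder_iff.1 <| by
    simpa [toModel] using toModel.isOfFinOrder h

lemma eq_one_of_commute_gx_gy {c : BG} (hx : Commute gx c) (hy : Commute gy c) : c = 1 :=
  toModel_injective <| (BGModel.eq_one_of_commute (by simpa [toModel] using hx.map toModel)
    (by simpa [toModel] using hy.map toModel)).trans (map_one _).symm

abbrev bsCentralizer : Subgroup BG := Subgroup.centralizer {gx} ⊓ Subgroup.closure {gx, gy}

lemma commute_gx (g : bsCentralizer) : Commute gx g :=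
  (Subgroup.mem_centralizer_singleton_iff.1 g.2.1).symm

lemma commute_bsCentralizer (g h : bsCentralizer) : Commute (g : BG) h :=
  BaumslagSolitar.commute_of_mem_closure_of_commute inv_gy_mul_gx_mul_gy not_isOfFinOrder_gx
    g.2.2 h.2.2 (commute_gx g) (commute_gx h)

def twistEnd (g : BG) (hg : Commute gx g) : BG →* BG :=
  lift gx gy (g * gt) inv_gy_mul_gx_mul_gy <| by
    calc (g * gt)⁻¹ * gx * (g * gt) = gt⁻¹ * (g⁻¹ * (gx * g)) * gt := by group
      _ = gy := by rw [hg.eq, inv_mul_cancel_left, inv_gt_mul_gx_mul_gt]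

section twistEnd

variable {g : BG} {hg : Commute gx g}

@[simp] lemma twistEnd_gx : twistEnd g hg gx = gx := by simp [twistEnd]
@[simp] lemma twistEnd_gy : twistEnd g hg gy = gy := by simp [twistEnd]
@[simp] lemma twistEnd_gt : twistEnd g hg gt = g * gt := by simp [twistEnd]

lemma twistEnd_apply_of_mem_closure {h : BG} (hh : h ∈ Subgroup.closure {gx, gy}) :
    twistEnd g hg h = h :=
  MonoidHom.eqOn_closure (f := twistEnd g hg) (g := MonoidHom.id BG)
    (by rintro _ (rfl | rfl) <;> simp) hh

end twistEnd

def twist : bsCentralizer →* Monoid.End BG where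
  toFun g := twistEnd g (commute_gx g)
  map_one' := hom_ext (f' := MonoidHom.id BG) (by simp) (by simp) (by simp)
  map_mul' g h := hom_ext (f' := (twistEnd g (commute_gx g)).comp (twistEnd h (commute_gx h)))
    (by simp) (by simp)
    (by simp [twistEnd_apply_of_mem_closure h.2.2, (commute_bsCentralizer g h).eq, mul_assoc])

@[simp] lemma twist_apply (g : bsCentralizer) (z : BG) : twist g z = twistEnd g (commute_gx g) z :=
  rfl

def twistAut : bsCentralizer →* MulAut BG := MulAut.ofEndHom twist

lemma twistAut_eq_of_apply {g : bsCentralizer} {F : MulAut BG} (hx : F gx = gx) (hy : F gy = gy)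
    (ht : F gt = g * gt) : twistAut g = F :=
  MulEquiv.toMonoidHom_injective <| hom_ext (by simp [twistAut, hx]) (by simp [twistAut, hy])
    (by simp [twistAut, ht])

lemma eq_one_of_twistAut_mem_innBG {g : bsCentralizer} (hg : twistAut g ∈ innBG) : g = 1 := by
  obtain ⟨c, hc⟩ := hg
  have hconj (z : BG) : c * z * c⁻¹ = twist g z := DFunLike.congr_fun hc z
  have hcomm {z : BG} (hz : twist g z = z) : Commute z c :=
    (mul_inv_eq_iff_eq_mul.1 ((hconj z).trans hz)).symm
  have hc1 : c = 1 := eq_one_of_commute_gx_gy (hcomm (by simp)) (hcomm (by simp))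
  simpa [hc1] using hconj gt

end BG

end

/-- The map from the centralizer of x in the Baumslag-Solitar subgroup
H = ⟨x, y⟩ of the Baumslag-Gersten group G to Out(G), sending g to the class of
the automorphism x ↦ x, y ↦ y, t ↦ gt, is an injective group homomorphism. -/
theorem bg_centralizer_into_out :
    ∃ φ : (Subgroup.centralizer {gx} ⊓ Subgroup.closure {gx, gy} : Subgroup BG) →* OutBG,
      Function.Injective φ ∧
      ∀ (g : (Subgroup.centralizer {gx} ⊓ Subgroup.closure {gx, gy} : Subgroup BG))
        (F : MulAut BG), F gx = gx → F gy = gy → F gt = (g : BG) * gt →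
          φ g = QuotientGroup.mk F := by
  refine ⟨(QuotientGroup.mk' innBG).comp BG.twistAut,
    (injective_iff_map_eq_one _).2 fun g hg => ?_, fun g F hx hy ht => ?_⟩
  · exact BG.eq_one_of_twistAut_mem_innBG ((QuotientGroup.eq_one_iff _).1 hg)
  · rw [MonoidHom.comp_apply, BG.twistAut_eq_of_apply hx hy ht]
    rfl
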